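/- The 27 triangular lattice points of a (2,3)-equiangular hexagon form an 11-distance set: the set of squared pairwise distances between distinct points is exactly {1, 3, 4, 7, 9, 12, 13, 16, 19, 21, 25}. -/

import Mathlib

/-!
In lattice coordinates `(a, b)` the hexagon `hexE k` is the polygon
`-(k+1) ≤ a ≤ k`, `0 ≤ b ≤ 2k+1`, `0 ≤ a + b ≤ 2k+1`: its vertices satisfy these inequalities,
and conversely every point of the polygon lies in one of the four triangles of the fan from the
vertex `0`. The squared distance between two lattice points is the Eisenstein norm
`a² + ab + b²` of their difference, so for `k = 2` both claims reduce to a finite computation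
on the 27 integer points of the polygon.
-/

/-- Triangular lattice point a•(1,0) + b•(1/2, √3/2). -/
noncomputable def tri (a b : ℤ) : ℝ × ℝ :=
  ((a : ℝ) + (b : ℝ) / 2, (b : ℝ) * Real.sqrt 3 / 2)

/-- Squared Euclidean distance in the plane. -/
def sqd (p q : ℝ × ℝ) : ℝ := (p.1 - q.1) ^ 2 + (p.2 - q.2) ^ 2

/-- The triangular lattice. -/
noncomputable def triLattice : Set (ℝ × ℝ) := {p | ∃ a b : ℤ, p = tri a b}

/-- Closed regular hexagon of side `k` centered at the origin with a vertex at `(k,0)`. -/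
noncomputable def hexR (k : ℤ) : Set (ℝ × ℝ) :=
  convexHull ℝ ({tri k 0, tri 0 k, tri (-k) k, tri (-k) 0, tri 0 (-k), tri k (-k)} : Set (ℝ × ℝ))

/-- Closed (k, k+1)-equiangular hexagon with vertices at lattice points. -/
noncomputable def hexE (k : ℤ) : Set (ℝ × ℝ) :=
  convexHull ℝ ({tri k 0, tri k (k+1), tri 0 (2*k+1), tri (-(k+1)) (2*k+1),
    tri (-(k+1)) (k+1), tri 0 0} : Set (ℝ × ℝ))

/-- Set of squared distances between distinct points of `X`. -/
def sqdSet (X : Set (ℝ × ℝ)) : Set ℝ := {d | ∃ p ∈ X, ∃ q ∈ X, p ≠ q ∧ d = sqd p q}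

open Set

noncomputable def latticeMap : (ℝ × ℝ) →ₗ[ℝ] ℝ × ℝ where
  toFun p := (p.1 + p.2 / 2, p.2 * Real.sqrt 3 / 2)
  map_add' p q := by ext <;> simp only [Prod.fst_add, Prod.snd_add] <;> ring
  map_smul' c p := by
    ext <;> simp only [Prod.smul_fst, Prod.smul_snd, smul_eq_mul, RingHom.id_apply] <;> ring

lemma tri_eq_latticeMap (a b : ℤ) : tri a b = latticeMap ((a : ℝ), (b : ℝ)) := rfl

lemma latticeMap_injective : Function.Injective latticeMap := by
  intro p q h
  have h1 : p.1 + p.2 / 2 = q.1 + q.2 / 2 := congrArg Prod.fst h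
  have h2 : p.2 * Real.sqrt 3 / 2 = q.2 * Real.sqrt 3 / 2 := congrArg Prod.snd h
  have hb : p.2 = q.2 := by
    have hs : Real.sqrt 3 ≠ 0 := by positivity
    exact mul_right_cancel₀ hs (by linarith)
  exact Prod.ext (by linarith) hb

lemma tri_injective : Function.Injective (Function.uncurry tri) := by
  rintro ⟨a, b⟩ ⟨c, d⟩ h
  have h' : ((a : ℝ), (b : ℝ)) = ((c : ℝ), (d : ℝ)) := latticeMap_injective h
  simpa only [Prod.ext_iff, Int.cast_inj] using h'

lemma smul_add_smul_mem_convexHull {𝕜 E : Type*} [Field 𝕜] [LinearOrder 𝕜]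
    [IsStrictOrderedRing 𝕜] [AddCommGroup E] [Module 𝕜 E]
    {s : Set E} {x y : E} (h₀ : 0 ∈ s) (hx : x ∈ s) (hy : y ∈ s) {a b : 𝕜}
    (ha : 0 ≤ a) (hb : 0 ≤ b) (hab : a + b ≤ 1) :
    a • x + b • y ∈ convexHull 𝕜 s := by
  have hmem : ∀ i, ![0, x, y] i ∈ convexHull 𝕜 s := by
    simp [Fin.forall_fin_succ, subset_convexHull 𝕜 s h₀, subset_convexHull 𝕜 s hx,
      subset_convexHull 𝕜 s hy]
  have hw : ∀ i, 0 ≤ ![1 - a - b, a, b] i := by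
    simp [Fin.forall_fin_succ, ha, hb, show 0 ≤ 1 - a - b by linarith]
  have hsum : ∑ i, ![1 - a - b, a, b] i = 1 := by
    simp only [Fin.sum_univ_three, Matrix.cons_val_zero, Matrix.cons_val_one,
      Matrix.cons_val_two, Matrix.tail_cons, Matrix.head_cons]
    ring
  simpa [Fin.sum_univ_three] using
    (convex_convexHull 𝕜 s).sum_mem (fun i _ => hw i) hsum (fun i _ => hmem i)

def hexVertices (k : ℝ) : Set (ℝ × ℝ) :=
  {(k, 0), (k, k + 1), (0, 2 * k + 1), (-(k + 1), 2 * k + 1), (-(k + 1), k + 1), (0, 0)}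

def hexCoords (k : ℝ) : Set (ℝ × ℝ) :=
  {p | p.1 ∈ Icc (-(k + 1)) k ∧ p.2 ∈ Icc 0 (2 * k + 1) ∧ p.1 + p.2 ∈ Icc 0 (2 * k + 1)}

lemma convex_hexCoords (k : ℝ) : Convex ℝ (hexCoords k) :=
  ((convex_Icc _ _).linear_preimage (LinearMap.fst ℝ ℝ ℝ)).inter
    (((convex_Icc _ _).linear_preimage (LinearMap.snd ℝ ℝ ℝ)).inter
      ((convex_Icc _ _).linear_preimage (LinearMap.fst ℝ ℝ ℝ + LinearMap.snd ℝ ℝ ℝ)))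

lemma hexVertices_subset_hexCoords (k : ℝ) (hk : 0 ≤ k) : hexVertices k ⊆ hexCoords k := by
  simp only [hexVertices, hexCoords, insert_subset_iff, singleton_subset_iff, mem_ofPred_eq,
    mem_Icc]
  refine ⟨?_, ?_, ?_, ?_, ?_, ?_⟩ <;> refine ⟨⟨?_, ?_⟩, ⟨?_, ?_⟩, ⟨?_, ?_⟩⟩ <;> linarith

lemma hexCoords_subset_convexHull (k : ℝ) (hk : 0 < k) :
    hexCoords k ⊆ convexHull ℝ (hexVertices k) := by
  rintro ⟨x, y⟩ ⟨⟨hx₁, hx₂⟩, ⟨hy₁, hy₂⟩, ⟨hxy₁, hxy₂⟩⟩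
  dsimp only at hx₁ hx₂ hy₁ hy₂ hxy₁ hxy₂
  have v₀ : (0 : ℝ × ℝ) ∈ hexVertices k := by simp [hexVertices, ← Prod.mk_zero_zero]
  have v₁ : (k, (0 : ℝ)) ∈ hexVertices k := by simp [hexVertices]
  have v₂ : (k, k + 1) ∈ hexVertices k := by simp [hexVertices]
  have v₃ : ((0 : ℝ), 2 * k + 1) ∈ hexVertices k := by simp [hexVertices]
  have v₄ : (-(k + 1), 2 * k + 1) ∈ hexVertices k := by simp [hexVertices]
  have v₅ : (-(k + 1), k + 1) ∈ hexVertices k := by simp [hexVertices]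
  have hk₁ : 0 < k + 1 := by linarith
  have hk₂ : 0 < 2 * k + 1 := by linarith
  -- Fan triangulation from the vertex `0`; the coefficients are barycentric coordinates.
  rcases le_total 0 x with hx | hx
  · rcases le_total (y * k) (x * (k + 1)) with h | h
    · convert smul_add_smul_mem_convexHull v₀ v₁ v₂
        (a := x / k - y / (k + 1)) (b := y / (k + 1)) ?_ ?_ ?_ using 1
      · simp only [Prod.smul_mk, smul_eq_mul, Prod.mk_add_mk, Prod.mk.injEq]
        constructor <;> field_simp <;> ring
      · rw [sub_nonneg, div_le_div_iff₀ hk₁ hk]; exact h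
      · positivity
      · rw [sub_add_cancel, div_le_one hk]; exact hx₂
    · convert smul_add_smul_mem_convexHull v₀ v₂ v₃
        (a := x / k) (b := (y * k - x * (k + 1)) / (k * (2 * k + 1))) ?_ ?_ ?_ using 1
      · simp only [Prod.smul_mk, smul_eq_mul, Prod.mk_add_mk, Prod.mk.injEq]
        constructor <;> field_simp <;> ring
      · positivity
      · exact div_nonneg (by linarith) (by positivity)
      · rw [div_add_div _ _ hk.ne' (by positivity), div_le_one (by positivity)]
        nlinarith [mul_le_mul_of_nonneg_left hxy₂ (sq_nonneg k)]
  · rcases le_total 0 (y * (k + 1) + x * (2 * k + 1)) with h | h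
    · convert smul_add_smul_mem_convexHull v₀ v₃ v₄
        (a := y / (2 * k + 1) + x / (k + 1)) (b := -x / (k + 1)) ?_ ?_ ?_ using 1
      · simp only [Prod.smul_mk, smul_eq_mul, Prod.mk_add_mk, Prod.mk.injEq]
        constructor <;> field_simp <;> ring
      · rw [div_add_div _ _ hk₂.ne' hk₁.ne']; exact div_nonneg (by linarith) (by positivity)
      · exact div_nonneg (by linarith) hk₁.le
      · rw [add_assoc, ← add_div, add_neg_cancel, zero_div, add_zero, div_le_one hk₂]; exact hy₂
    · convert smul_add_smul_mem_convexHull v₀ v₄ v₅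
        (a := (x + y) / k) (b := -x / (k + 1) - (x + y) / k) ?_ ?_ ?_ using 1
      · simp only [Prod.smul_mk, smul_eq_mul, Prod.mk_add_mk, Prod.mk.injEq]
        constructor <;> field_simp <;> ring
      · exact div_nonneg hxy₁ hk.le
      · rw [sub_nonneg, div_le_div_iff₀ hk hk₁]; nlinarith
      · rw [add_sub_cancel, div_le_one hk₁]; linarith

lemma convexHull_hexVertices (k : ℝ) (hk : 0 < k) :
    convexHull ℝ (hexVertices k) = hexCoords k :=
  (convexHull_min (hexVertices_subset_hexCoords k hk.le) (convex_hexCoords k)).antisymm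
    (hexCoords_subset_convexHull k hk)

lemma hexE_eq_image (k : ℤ) (hk : 0 < k) : hexE k = latticeMap '' hexCoords k := by
  rw [← convexHull_hexVertices k (by exact_mod_cast hk), latticeMap.image_convexHull, hexE]
  congr 1
  simp only [hexVertices, image_insert_eq, image_singleton, tri_eq_latticeMap]
  push_cast
  rfl

noncomputable def hexLatticeCoords (k : ℤ) : Finset (ℤ × ℤ) :=
  (Finset.Icc (-(k + 1)) k ×ˢ Finset.Icc 0 (2 * k + 1)).filter
    fun p => 0 ≤ p.1 + p.2 ∧ p.1 + p.2 ≤ 2 * k + 1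

lemma intCast_mem_hexCoords_iff (k a b : ℤ) :
    ((a : ℝ), (b : ℝ)) ∈ hexCoords k ↔ (a, b) ∈ hexLatticeCoords k := by
  simp only [hexCoords, hexLatticeCoords, mem_ofPred_eq, mem_Icc, Finset.mem_filter,
    Finset.mem_product, Finset.mem_Icc]
  norm_cast
  tauto

lemma triLattice_inter_hexE (k : ℤ) (hk : 0 < k) :
    triLattice ∩ hexE k = ↑((hexLatticeCoords k).image (Function.uncurry tri)) := by
  ext p
  simp only [triLattice, hexE_eq_image k hk, mem_inter_iff, mem_ofPred_eq, Finset.coe_image,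
    mem_image, Finset.mem_coe]
  constructor
  · rintro ⟨⟨a, b, rfl⟩, q, hq, hqab⟩
    obtain rfl : q = ((a : ℝ), (b : ℝ)) := latticeMap_injective hqab
    exact ⟨(a, b), (intCast_mem_hexCoords_iff k a b).1 hq, rfl⟩
  · rintro ⟨⟨a, b⟩, hab, rfl⟩
    exact ⟨⟨a, b, rfl⟩, _, (intCast_mem_hexCoords_iff k a b).2 hab, rfl⟩

def eisensteinNorm (v : ℤ × ℤ) : ℤ := v.1 ^ 2 + v.1 * v.2 + v.2 ^ 2

lemma sqd_tri (a b c d : ℤ) : sqd (tri a b) (tri c d) = eisensteinNorm (a - c, b - d) := by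
  have h3 : Real.sqrt 3 ^ 2 = 3 := Real.sq_sqrt (by norm_num)
  simp only [sqd, tri, eisensteinNorm]
  push_cast
  linear_combination (b - d) ^ 2 / 4 * h3

lemma sqdSet_image_tri (S : Finset (ℤ × ℤ)) :
    sqdSet ↑(S.image (Function.uncurry tri)) =
      (Int.cast : ℤ → ℝ) '' ↑(S.offDiag.image fun pq => eisensteinNorm (pq.1 - pq.2)) := by
  ext r
  simp only [sqdSet, Finset.coe_image, mem_image, Finset.mem_coe, Finset.mem_offDiag,
    mem_ofPred_eq]
  constructor
  · rintro ⟨_, ⟨⟨a, b⟩, hab, rfl⟩, _, ⟨⟨c, d⟩, hcd, rfl⟩, hne, rfl⟩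
    refine ⟨_, ⟨((a, b), (c, d)), ⟨hab, hcd, ?_⟩, rfl⟩, (sqd_tri a b c d).symm⟩
    exact fun h => hne (congrArg (Function.uncurry tri) h)
  · rintro ⟨_, ⟨⟨⟨a, b⟩, ⟨c, d⟩⟩, ⟨hab, hcd, hne⟩, rfl⟩, rfl⟩
    exact ⟨_, ⟨(a, b), hab, rfl⟩, _, ⟨(c, d), hcd, rfl⟩,
      fun h => hne (tri_injective h), (sqd_tri a b c d).symm⟩

lemma card_hexLatticeCoords_two : (hexLatticeCoords 2).card = 27 := by decide

lemma hexLatticeCoords_two_distances :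
    (hexLatticeCoords 2).offDiag.image (fun pq => eisensteinNorm (pq.1 - pq.2)) =
      {1, 3, 4, 7, 9, 12, 13, 16, 19, 21, 25} := by decide +kernel

theorem equiangular_2_3_hexagon_eleven_distance :
    (triLattice ∩ hexE 2).ncard = 27 ∧
      sqdSet (triLattice ∩ hexE 2) = {1, 3, 4, 7, 9, 12, 13, 16, 19, 21, 25} := by
  rw [triLattice_inter_hexE 2 two_pos]
  refine ⟨?_, ?_⟩
  · rw [Set.ncard_coe_finset, Finset.card_image_of_injective _ tri_injective,
      card_hexLatticeCoords_two]
  · rw [sqdSet_image_tri, hexLatticeCoords_two_distances]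
    simp only [Finset.coe_insert, Finset.coe_singleton, image_insert_eq, image_singleton]
    norm_num
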